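/- Let ν ∈ S^{n−1} with ν · e_1 ≠ 0. Then the linear map Φ : ℝ^n × ℝ^{n_*−n} → Sym_n defined by Φ(α, β) = α ⊙ ν + Σ_{j=n+1}^{n_*} β_{j−n} ν_j ⊗ ν_j is a linear isomorphism. -/

import Mathlib

noncomputable section

open Real Set MeasureTheory
open scoped RealInnerProductSpace

abbrev Euc (n : ℕ) := EuclideanSpace ℝ (Fin n)

def eVec (n : ℕ) (i : Fin n) : Euc n := EuclideanSpace.single i 1

def nstar (n : ℕ) : ℕ := n * (n + 1) / 2

lemma n_le_nstar (n : ℕ) : n ≤ nstar n := by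
  unfold nstar
  rcases Nat.eq_zero_or_pos n with h | h
  · simp [h]
  · rw [Nat.le_div_iff_mul_le (by norm_num)]
    exact Nat.mul_le_mul (le_refl n) (by omega)

def nuSet (n : ℕ) : Set (Euc n) :=
  {v | ∃ i j : Fin n, i ≤ j ∧ v = ‖eVec n i + eVec n j‖⁻¹ • (eVec n i + eVec n j)}

def tailIdx (n : ℕ) (j : Fin (nstar n - n)) : Fin (nstar n) :=
  ⟨n + j.1, by have h := n_le_nstar n; have h2 := j.2; omega⟩

def toEuc {n : ℕ} (f : Fin n → ℝ) : Euc n := (WithLp.equiv 2 (Fin n → ℝ)).symm f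

def tensor {n : ℕ} (v w : Euc n) : Matrix (Fin n) (Fin n) ℝ :=
  Matrix.of fun i j => v i * w j

def symPart {n : ℕ} (A : Matrix (Fin n) (Fin n) ℝ) : Matrix (Fin n) (Fin n) ℝ :=
  (1 / 2 : ℝ) • (A + A.transpose)

attribute [local instance] Matrix.normedAddCommGroup Matrix.normedSpace

def CkNormOn {E F : Type*} [NormedAddCommGroup E] [NormedSpace ℝ E]
    [NormedAddCommGroup F] [NormedSpace ℝ F] (s : Set E) (k : ℕ) (f : E → F) : ℝ :=
  ∑ j ∈ Finset.range (k + 1), sSup ((fun x => ‖iteratedFDerivWithin ℝ j f s x‖) '' s)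

def inducedMetric {n m : ℕ} (s : Set (Euc n)) (u : Euc n → Euc m) (x : Euc n) :
    Matrix (Fin n) (Fin n) ℝ :=
  Matrix.of fun i j => ⟪fderivWithin ℝ u s x (eVec n i), fderivWithin ℝ u s x (eVec n j)⟫

def jac {n : ℕ} (s : Set (Euc n)) (w : Euc n → Euc n) (x : Euc n) :
    Matrix (Fin n) (Fin n) ℝ :=
  Matrix.of fun i j => fderivWithin ℝ w s x (eVec n j) i

def gradv {n : ℕ} (s : Set (Euc n)) (f : Euc n → ℝ) (x : Euc n) : Euc n :=
  toEuc fun i => fderivWithin ℝ f s x (eVec n i)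

def Immersed {n m : ℕ} (s : Set (Euc n)) (u : Euc n → Euc m) : Prop :=
  ∀ x ∈ s, Function.Injective (fderivWithin ℝ u s x)

namespace Stmt5
variable {n : ℕ}

variable {n : ℕ}

def Wv (n : ℕ) (p q : Fin n) : Euc n := ‖eVec n p + eVec n q‖⁻¹ • (eVec n p + eVec n q)

lemma eVec_apply (i a : Fin n) : eVec n i a = if a = i then 1 else 0 :=
  EuclideanSpace.single_apply i 1 a

lemma norm_eVec_add_self (p : Fin n) : ‖eVec n p + eVec n p‖ = 2 := by
  have h : eVec n p + eVec n p = (2:ℝ) • eVec n p := (two_smul ℝ _).symm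
  rw [h, norm_smul]
  simp [eVec, EuclideanSpace.norm_single]

lemma norm_eVec_add (p q : Fin n) (h : p ≠ q) : ‖eVec n p + eVec n q‖ = Real.sqrt 2 := by
  have h2 : ‖eVec n p + eVec n q‖^2 = 2 := by
    rw [norm_add_sq_real]
    have hi : ⟪eVec n p, eVec n q⟫ = (0:ℝ) := by
      rw [eVec, eVec, EuclideanSpace.inner_single_left]
      simp [EuclideanSpace.single_apply, h]
    rw [hi]
    simp [eVec, EuclideanSpace.norm_single]
    norm_num
  rw [← Real.sqrt_sq (norm_nonneg _), h2]

lemma Wv_diag (p : Fin n) : Wv n p p = eVec n p := by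
  rw [Wv, norm_eVec_add_self, ← two_smul ℝ (eVec n p), smul_smul]
  norm_num

lemma Wv_apply (p q a : Fin n) :
    Wv n p q a = if a = p ∨ a = q then (if p = q then 1 else (Real.sqrt 2)⁻¹) else 0 := by
  by_cases hpq : p = q
  · subst hpq
    rw [Wv_diag, eVec_apply]
    simp
  · rw [Wv, norm_eVec_add p q hpq]
    show (Real.sqrt 2)⁻¹ * (eVec n p a + eVec n q a) = _
    rw [eVec_apply, eVec_apply]
    have h2 : (Real.sqrt 2)⁻¹ ≠ 0 := by positivity
    by_cases h1 : a = p
    · simp [h1, hpq, Ne.symm hpq]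
    · by_cases h3 : a = q <;> simp [h1, h3, hpq, Ne.symm hpq]

lemma sqrt2_inv_ne : (Real.sqrt 2)⁻¹ ≠ (0:ℝ) := by positivity

lemma Wv_ne_iff (p q a : Fin n) : Wv n p q a ≠ 0 ↔ (a = p ∨ a = q) := by
  rw [Wv_apply]
  split_ifs with h1 h2 <;> simp_all [sqrt2_inv_ne]

lemma Wv_comm (p q : Fin n) : Wv n p q = Wv n q p := by
  rw [Wv, Wv, add_comm (eVec n p) (eVec n q)]

lemma Wv_mem (p q : Fin n) (h : p ≤ q) : Wv n p q ∈ nuSet n := ⟨p, q, h, rfl⟩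

lemma Wv_prod (p q a b : Fin n) (hpq : p ≠ q) (ha : a = p ∨ a = q) (hb : b = p ∨ b = q) :
    Wv n p q a * Wv n p q b = 1/2 := by
  rw [Wv_apply, Wv_apply, if_pos ha, if_pos hb]
  rw [if_neg hpq, ← mul_inv, Real.mul_self_sqrt (by norm_num)]
  norm_num

lemma Wv_inj {p q r s : Fin n} (hpq : p ≤ q) (hrs : r ≤ s) (h : Wv n p q = Wv n r s) :
    p = r ∧ q = s := by
  have H : ∀ a : Fin n, (a = p ∨ a = q) ↔ (a = r ∨ a = s) := fun a => by
    rw [← Wv_ne_iff, ← Wv_ne_iff, h]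
  have h1 := (H p).mp (Or.inl rfl)
  have h2 := (H q).mp (Or.inr rfl)
  have h3 := (H r).mpr (Or.inl rfl)
  have h4 := (H s).mpr (Or.inr rfl)
  rw [Fin.le_def] at hpq hrs
  simp only [Fin.ext_iff] at h1 h2 h3 h4 ⊢
  omega

lemma pairDet {p q r s a b : Fin n} (hpq : p ≤ q) (hrs : r ≤ s) (hab : a ≠ b)
    (h1 : a = p ∨ a = q) (h2 : b = p ∨ b = q) (h3 : a = r ∨ a = s) (h4 : b = r ∨ b = s) :
    p = r ∧ q = s := by
  rw [Fin.le_def] at hpq hrs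
  simp only [Fin.ext_iff] at h1 h2 h3 h4 hab ⊢
  omega

lemma nuSet_eq_Wv : nuSet n = {v | ∃ p q : Fin n, p ≤ q ∧ v = Wv n p q} := rfl


lemma counting (n : ℕ) (νf : Fin (nstar n) → Euc n)
    (hν_inj : Function.Injective νf)
    (hν_range : Set.range νf = nuSet n)
    (z : Fin n) (hz : (z:ℕ) = 0)
    (hν_ord : ∀ i : Fin (nstar n), (i : ℕ) < n → νf i z ≠ 0) :
    (∀ j : Fin (nstar n - n), νf (tailIdx n j) z = 0) ∧
    (∀ p q : Fin n, p ≤ q → p ≠ z → ∃ j, νf (tailIdx n j) = Wv n p q) := by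
  classical
  have hnuFin : (nuSet n).Finite := hν_range ▸ Set.finite_range νf
  have hz_min : ∀ p : Fin n, p ≤ z → p = z := fun p hp => by
    rw [Fin.le_def, hz] at hp; exact Fin.ext (by omega)
  have memW : ∀ v ∈ nuSet n, ∃ p q : Fin n, p ≤ q ∧ v = Wv n p q := fun v hv => hv
  set T' : Set (Euc n) := {v ∈ nuSet n | v z ≠ 0} with hT'
  have hT'sub : T' ⊆ nuSet n := Set.sep_subset _ _
  have hkey : T' = Set.range (fun k => Wv n z k) := by
    apply Set.Subset.antisymm
    · rintro v ⟨hv, hvz⟩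
      obtain ⟨p, q, hpq, rfl⟩ := memW v hv
      have hd := (Wv_ne_iff p q z).mp hvz
      have hp : p = z := by
        rcases hd with h | h
        · exact h.symm
        · exact hz_min p (h ▸ hpq)
      exact ⟨q, by rw [hp]⟩
    · rintro v ⟨k, rfl⟩
      have hzk : z ≤ k := by rw [Fin.le_def, hz]; omega
      refine ⟨Wv_mem z k hzk, ?_⟩
      rw [Wv_ne_iff]; exact Or.inl rfl
  have hWzinj : Function.Injective (fun k : Fin n => Wv n z k) := by
    intro k k' h
    have hzk : z ≤ k := by rw [Fin.le_def, hz]; omega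
    have hzk' : z ≤ k' := by rw [Fin.le_def, hz]; omega
    exact (Wv_inj hzk hzk' h).2
  have hT'card : T'.ncard = n := by
    rw [hkey, ← Set.image_univ, Set.ncard_image_of_injective _ hWzinj, Set.ncard_univ,
      Nat.card_eq_fintype_card, Fintype.card_fin]
  set ff : Fin n → Euc n := fun k => νf (Fin.castLE (n_le_nstar n) k) with hff
  have hffinj : Function.Injective ff :=
    hν_inj.comp (Fin.castLE_injective _)
  have hffsub : Set.range ff ⊆ T' := by
    rintro v ⟨k, rfl⟩
    exact ⟨hν_range ▸ Set.mem_range_self _, hν_ord _ (by simp [k.2])⟩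
  have hffcard : (Set.range ff).ncard = n := by
    rw [← Set.image_univ, Set.ncard_image_of_injective _ hffinj, Set.ncard_univ,
      Nat.card_eq_fintype_card, Fintype.card_fin]
  have hrange_eq : Set.range ff = T' :=
    Set.eq_of_subset_of_ncard_le hffsub (by rw [hT'card, hffcard]) (hnuFin.subset hT'sub)
  have stepA : ∀ j : Fin (nstar n - n), νf (tailIdx n j) z = 0 := by
    intro j
    by_contra hnz
    have : νf (tailIdx n j) ∈ T' := ⟨hν_range ▸ Set.mem_range_self _, hnz⟩
    rw [← hrange_eq] at this
    obtain ⟨k, hk⟩ := this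
    have := hν_inj hk
    have hk2 : (Fin.castLE (n_le_nstar n) k : ℕ) = n + j.1 := by rw [this]; rfl
    have := k.2
    simp at hk2
    omega
  refine ⟨stepA, ?_⟩
  set S : Set (Euc n) := {v ∈ nuSet n | v z = 0} with hS
  have hSdiff : S = nuSet n \ T' := by
    ext v; simp only [hS, hT', Set.mem_sep_iff, Set.mem_diff, not_and, Set.mem_setOf_eq]
    constructor
    · rintro ⟨h1, h2⟩; exact ⟨h1, fun _ h => h h2⟩
    · rintro ⟨h1, h2⟩; exact ⟨h1, by by_contra h; exact (h2 h1) h⟩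
  have hnucard : (nuSet n).ncard = nstar n := by
    rw [← hν_range, ← Set.image_univ, Set.ncard_image_of_injective _ hν_inj, Set.ncard_univ,
      Nat.card_eq_fintype_card, Fintype.card_fin]
  have hScard : S.ncard = nstar n - n := by
    rw [hSdiff, Set.ncard_diff hT'sub (hnuFin.subset hT'sub), hnucard, hT'card]
  set tl : Fin (nstar n - n) → Euc n := fun j => νf (tailIdx n j) with htl
  have htlinj : Function.Injective tl := by
    intro j j' h
    have := hν_inj h
    have h2 : (tailIdx n j : ℕ) = (tailIdx n j' : ℕ) := by rw [this]
    simp only [tailIdx] at h2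
    exact Fin.ext (by omega)
  have htlsub : Set.range tl ⊆ S := by
    rintro v ⟨j, rfl⟩
    exact ⟨hν_range ▸ Set.mem_range_self _, stepA j⟩
  have htlcard : (Set.range tl).ncard = nstar n - n := by
    rw [← Set.image_univ, Set.ncard_image_of_injective _ htlinj, Set.ncard_univ,
      Nat.card_eq_fintype_card, Fintype.card_fin]
  have htl_eq : Set.range tl = S :=
    Set.eq_of_subset_of_ncard_le htlsub (by rw [hScard, htlcard])
      (hnuFin.subset (fun v hv => hv.1))
  intro p q hpq hp
  have hq : q ≠ z := by
    intro hq
    exact hp (hz_min p (hq ▸ hpq))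
  have hmem : Wv n p q ∈ S := by
    refine ⟨Wv_mem p q hpq, ?_⟩
    by_contra hnz
    rcases (Wv_ne_iff p q z).mp hnz with h | h
    · exact hp h.symm
    · exact hq h.symm
  rw [← htl_eq] at hmem
  exact hmem

lemma entry {n m : ℕ} (x : Fin n → ℝ) (ν : Euc n) (c : Fin m → ℝ) (v : Fin m → Euc n)
    (a b : Fin n) :
    (symPart (tensor (toEuc x) ν) + ∑ j, c j • tensor (v j) (v j)) a b
      = 1/2 * (x a * ν b + x b * ν a) + ∑ j, c j * (v j a * v j b) := by
  simp only [Matrix.add_apply, Matrix.sum_apply, Matrix.smul_apply, symPart, tensor,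
    Matrix.transpose_apply, Matrix.of_apply, smul_eq_mul, toEuc, WithLp.equiv_symm_apply, PiLp.toLp_apply]
  try ring_nf

set_option maxHeartbeats 400000 in
lemma sumdiag (n : ℕ) (z : Fin n) (hz : (z:ℕ) = 0)
    (m : ℕ) (w : Fin m → Euc n) (hwinj : Function.Injective w)
    (pj qj : Fin m → Fin n) (hle : ∀ j, pj j ≤ qj j) (hpz : ∀ j, pj j ≠ z)
    (hqz : ∀ j, qj j ≠ z)
    (hW : ∀ j, w j = Wv n (pj j) (qj j))
    (hsurj : ∀ p q : Fin n, p ≤ q → p ≠ z → ∃ j, w j = Wv n p q)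
    (pairRec : ∀ (j) (p q : Fin n), p ≤ q → w j = Wv n p q → pj j = p ∧ qj j = q)
    (B : Fin n → Fin n → ℝ) (hBsymm : ∀ a b, B b a = B a b)
    (hBz2 : ∀ a, B a z = 0)
    (βv : Fin m → ℝ)
    (hβv : ∀ j, βv j = if pj j = qj j then 2*B (pj j) (pj j) - ∑ k, B (pj j) k
      else 2 * B (pj j) (qj j)) :
    ∀ a : Fin n, a ≠ z → (∑ j, βv j * (w j a * w j a)) = B a a := by
  classical
  intro a haz
  obtain ⟨j0, hj0⟩ := hsurj a a le_rfl haz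
  obtain ⟨hp0, hq0⟩ := pairRec j0 a a le_rfl hj0
  rw [← Finset.add_sum_erase _ (fun j => βv j * (w j a * w j a)) (Finset.mem_univ j0)]
  have hterm0 : βv j0 * (w j0 a * w j0 a) = 2*B a a - ∑ k, B a k := by
    have hwa : w j0 a = 1 := by
      rw [hj0, Wv_apply]; simp
    have hβj0 : βv j0 = 2*B a a - ∑ k, B a k := by
      rw [hβv j0]
      simp only [hp0, hq0, if_true, eq_self_iff_true]
    rw [hwa, hβj0, mul_one, mul_one]
  have hne0 : ∀ j' ∈ Finset.univ.erase j0,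
      βv j' * (w j' a * w j' a) ≠ 0 → w j' a ≠ 0 :=
    fun j' _ h0 hwa => h0 (by rw [hwa]; ring)
  have hchar : ∀ j' ∈ (Finset.univ.erase j0).filter (fun j' => w j' a ≠ 0),
      (pj j' = a ∧ (if pj j' = a then qj j' else pj j') = qj j' ∧ pj j' ≠ qj j')
      ∨ (qj j' = a ∧ (if pj j' = a then qj j' else pj j') = pj j' ∧ pj j' ≠ qj j') := by
    intro j' hj'
    rw [Finset.mem_filter, Finset.mem_erase] at hj'
    obtain ⟨⟨hjne, -⟩, hwa⟩ := hj'
    have hsupp : a = pj j' ∨ a = qj j' := by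
      apply (Wv_ne_iff _ _ _).mp
      rw [← hW j']; exact hwa
    have hdne : pj j' ≠ qj j' := by
      intro he
      have hqa : qj j' = a := by
        rcases hsupp with h | h
        · rw [← he]; exact h.symm
        · exact h.symm
      exact hjne (hwinj (by rw [hW j', hj0, he, hqa]))
    by_cases hc : pj j' = a
    · exact Or.inl ⟨hc, if_pos hc, hdne⟩
    · refine Or.inr ⟨?_, if_neg hc, hdne⟩
      rcases hsupp with h | h
      · exact absurd h.symm hc
      · exact h.symm
  have hrest : (∑ j' ∈ (Finset.univ.erase j0).filter (fun j' => w j' a ≠ 0),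
        βv j' * (w j' a * w j' a)) = ∑ k ∈ (Finset.univ.erase a).erase z, B a k := by
    apply Finset.sum_bij (i := fun j' _ => if pj j' = a then qj j' else pj j')
    · intro j' hj'
      rcases hchar j' hj' with ⟨h1, h2, h3⟩ | ⟨h1, h2, h3⟩
      · rw [h2]
        exact Finset.mem_erase.mpr ⟨hqz j',
          Finset.mem_erase.mpr ⟨fun h => h3 (h1.trans h.symm), Finset.mem_univ _⟩⟩
      · rw [h2]
        exact Finset.mem_erase.mpr ⟨hpz j',
          Finset.mem_erase.mpr ⟨fun h => h3 (h.trans h1.symm), Finset.mem_univ _⟩⟩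
    · intro j1 hj1 j2 hj2 heq
      apply hwinj
      rw [hW j1, hW j2]
      rcases hchar j1 hj1 with ⟨h1, h2, h3⟩ | ⟨h1, h2, h3⟩ <;>
        rcases hchar j2 hj2 with ⟨h4, h5, h6⟩ | ⟨h4, h5, h6⟩
      · rw [h1, h4, h2.symm.trans (heq.trans h5)]
      · have ho : qj j1 = pj j2 := h2.symm.trans (heq.trans h5)
        have hle1 := hle j1
        have hle2 := hle j2
        rw [h1] at hle1
        rw [h4, ← ho] at hle2
        have hqa : qj j1 = a := le_antisymm hle2 hle1
        exact absurd (h1.trans hqa.symm) h3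
      · have ho : pj j1 = qj j2 := h2.symm.trans (heq.trans h5)
        have hle1 := hle j1
        have hle2 := hle j2
        rw [h1] at hle1
        rw [h4, ← ho] at hle2
        have hpa : pj j1 = a := le_antisymm hle1 hle2
        exact absurd (hpa.trans h1.symm) h3
      · rw [h1, h4, h2.symm.trans (heq.trans h5)]
    · intro k hk
      rw [Finset.mem_erase, Finset.mem_erase] at hk
      obtain ⟨hkz, hka, -⟩ := hk
      rcases le_total a k with hak | hka2
      · obtain ⟨j', hj'⟩ := hsurj a k hak haz
        obtain ⟨hp, hq⟩ := pairRec j' a k hak hj'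
        have hjne : j' ≠ j0 := by
          intro he
          rw [he, hj0] at hj'
          exact hka ((Wv_inj hak le_rfl hj'.symm).2)
        have hmem : j' ∈ (Finset.univ.erase j0).filter (fun j' => w j' a ≠ 0) := by
          rw [Finset.mem_filter, Finset.mem_erase]
          refine ⟨⟨hjne, Finset.mem_univ _⟩, ?_⟩
          rw [hj']
          exact (Wv_ne_iff _ _ _).mpr (Or.inl rfl)
        refine ⟨j', hmem, ?_⟩
        show (if pj j' = a then qj j' else pj j') = k
        rw [if_pos hp, hq]
      · obtain ⟨j', hj'⟩ := hsurj k a hka2 hkz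
        obtain ⟨hp, hq⟩ := pairRec j' k a hka2 hj'
        have hjne : j' ≠ j0 := by
          intro he
          rw [he, hj0] at hj'
          exact hka (Wv_inj hka2 le_rfl hj'.symm).1
        have hmem : j' ∈ (Finset.univ.erase j0).filter (fun j' => w j' a ≠ 0) := by
          rw [Finset.mem_filter, Finset.mem_erase]
          refine ⟨⟨hjne, Finset.mem_univ _⟩, ?_⟩
          rw [hj']
          exact (Wv_ne_iff _ _ _).mpr (Or.inr rfl)
        have hcnd : ¬ (pj j' = a) := by rw [hp]; exact fun h => hka h
        refine ⟨j', hmem, ?_⟩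
        show (if pj j' = a then qj j' else pj j') = k
        rw [if_neg hcnd, hp]
    · intro j' hj'
      rcases hchar j' hj' with ⟨h1, h2, h3⟩ | ⟨h1, h2, h3⟩
      · rw [h2]
        have hprod : w j' a * w j' a = 1/2 := by
          rw [hW j']
          exact Wv_prod _ _ _ _ h3 (Or.inl h1.symm) (Or.inl h1.symm)
        rw [hprod, hβv j']
        simp only [if_neg h3]
        rw [h1]
        ring
      · rw [h2]
        have hprod : w j' a * w j' a = 1/2 := by
          rw [hW j']
          exact Wv_prod _ _ _ _ h3 (Or.inr h1.symm) (Or.inr h1.symm)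
        rw [hprod, hβv j']
        simp only [if_neg h3]
        rw [h1, hBsymm a (pj j')]
        ring
  have h5 : (∑ k ∈ (Finset.univ.erase a).erase z, B a k)
      = ∑ k ∈ Finset.univ.erase a, B a k := Finset.sum_erase _ (hBz2 a)
  have h6 : (∑ k ∈ Finset.univ.erase a, B a k) = (∑ k, B a k) - B a a :=
    Finset.sum_erase_eq_sub (Finset.mem_univ a)
  rw [← Finset.sum_filter_of_ne hne0, hrest, hterm0, h5, h6]
  ring

set_option maxHeartbeats 1600000 in
lemma key (n : ℕ) (hn : 0 < n) (z : Fin n) (hz : (z:ℕ) = 0) (ν : Euc n) (hνz : ν z ≠ 0)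
    (m : ℕ) (w : Fin m → Euc n) (hwinj : Function.Injective w)
    (pj qj : Fin m → Fin n) (hle : ∀ j, pj j ≤ qj j) (hpz : ∀ j, pj j ≠ z)
    (hW : ∀ j, w j = Wv n (pj j) (qj j))
    (hsurj : ∀ p q : Fin n, p ≤ q → p ≠ z → ∃ j, w j = Wv n p q) :
    Function.Injective (fun p : (Fin n → ℝ) × (Fin m → ℝ) =>
        symPart (tensor (toEuc p.1) ν) + ∑ j, p.2 j • tensor (w j) (w j)) ∧
    Set.range (fun p : (Fin n → ℝ) × (Fin m → ℝ) =>
        symPart (tensor (toEuc p.1) ν) + ∑ j, p.2 j • tensor (w j) (w j))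
      = {A : Matrix (Fin n) (Fin n) ℝ | A.IsSymm} := by
  classical
  have hz_min : ∀ p : Fin n, p ≤ z → p = z := fun p hp => by
    rw [Fin.le_def, hz] at hp; exact Fin.ext (by omega)
  have hqz : ∀ j, qj j ≠ z := fun j hq => hpz j (hz_min _ (hq ▸ hle j))
  have hwz : ∀ j, w j z = 0 := by
    intro j
    by_contra h0
    rw [hW j] at h0
    rcases (Wv_ne_iff _ _ _).mp h0 with h | h
    · exact hpz j h.symm
    · exact hqz j h.symm
  have pairRec : ∀ (j) (p q : Fin n), p ≤ q → w j = Wv n p q → pj j = p ∧ qj j = q :=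
    fun j p q h1 h2 => Wv_inj (hle j) h1 ((hW j).symm.trans h2)
  -- linear independence of the tail family
  have indep : ∀ (c d : Fin m → ℝ),
      (∀ a b : Fin n, (∑ j, c j * (w j a * w j b)) = ∑ j, d j * (w j a * w j b)) → c = d := by
    intro c d hcd
    have stage1 : ∀ j, pj j ≠ qj j → c j = d j := by
      intro j hj
      have hfac : ∀ j', j' ≠ j → w j' (pj j) * w j' (qj j) = 0 := by
        intro j' hj'
        by_contra h0
        obtain ⟨h1, h2⟩ := mul_ne_zero_iff.mp h0
        rw [hW j'] at h1 h2
        obtain ⟨hp, hq⟩ := pairDet (hle j') (hle j) hj ((Wv_ne_iff _ _ _).mp h1)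
          ((Wv_ne_iff _ _ _).mp h2) (Or.inl rfl) (Or.inr rfl)
        exact hj' (hwinj (by rw [hW j', hW j, hp, hq]))
      have hs := hcd (pj j) (qj j)
      rw [Finset.sum_eq_single_of_mem j (Finset.mem_univ j)
          (fun j' _ h => by rw [hfac j' h, mul_zero]),
        Finset.sum_eq_single_of_mem j (Finset.mem_univ j)
          (fun j' _ h => by rw [hfac j' h, mul_zero])] at hs
      have hprod : w j (pj j) * w j (qj j) = 1/2 := by
        rw [hW j]; exact Wv_prod _ _ _ _ hj (Or.inl rfl) (Or.inr rfl)
      rw [hprod] at hs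
      linarith
    funext j
    by_cases hj : pj j = qj j
    swap
    · exact stage1 j hj
    · have hs := hcd (pj j) (pj j)
      rw [← Finset.add_sum_erase _ _ (Finset.mem_univ j),
        ← Finset.add_sum_erase _ _ (Finset.mem_univ j)] at hs
      have herase : ∀ j' ∈ Finset.univ.erase j,
          c j' * (w j' (pj j) * w j' (pj j)) = d j' * (w j' (pj j) * w j' (pj j)) := by
        intro j' hj'
        have hne' : j' ≠ j := Finset.ne_of_mem_erase hj'
        by_cases h0 : w j' (pj j) = 0
        · rw [h0]; ring
        · have hd : pj j = pj j' ∨ pj j = qj j' := by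
            rw [hW j'] at h0; exact (Wv_ne_iff _ _ _).mp h0
          have hoff : pj j' ≠ qj j' := by
            intro he
            have hpp : pj j' = pj j := by
              rcases hd with h | h
              · exact h.symm
              · rw [← he] at h; exact h.symm
            exact hne' (hwinj (by rw [hW j', hW j, ← he, hpp, hj]))
          rw [stage1 j' hoff]
      rw [Finset.sum_congr rfl herase] at hs
      have h1 : c j * (w j (pj j) * w j (pj j)) = d j * (w j (pj j) * w j (pj j)) := by
        linarith
      have hprod : w j (pj j) * w j (pj j) = 1 := by
        rw [hW j, ← hj, Wv_apply]
        simp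
      rw [hprod, mul_one, mul_one] at h1
      exact h1
  constructor
  · intro x y hxy
    have h2 : symPart (tensor (toEuc x.1) ν) + ∑ j, x.2 j • tensor (w j) (w j)
        = symPart (tensor (toEuc y.1) ν) + ∑ j, y.2 j • tensor (w j) (w j) := hxy
    have hE : ∀ a b : Fin n,
        1/2 * (x.1 a * ν b + x.1 b * ν a) + (∑ j, x.2 j * (w j a * w j b))
          = 1/2 * (y.1 a * ν b + y.1 b * ν a) + ∑ j, y.2 j * (w j a * w j b) := by
      intro a b
      rw [← entry x.1 ν x.2 w a b, ← entry y.1 ν y.2 w a b, h2]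
    have hsum0 : ∀ (cf : Fin m → ℝ) (b : Fin n), (∑ j, cf j * (w j z * w j b)) = 0 :=
      fun cf b => Finset.sum_eq_zero fun j _ => by rw [hwz j, zero_mul, mul_zero]
    have hαz : x.1 z = y.1 z := by
      have h := hE z z
      rw [hsum0, hsum0] at h
      have h3 : x.1 z * ν z = y.1 z * ν z := by linarith
      exact mul_right_cancel₀ hνz h3
    have hα : x.1 = y.1 := by
      funext b
      have h := hE z b
      rw [hsum0, hsum0] at h
      have h3 : x.1 b * ν z = y.1 b * ν z := by rw [hαz] at h; linarith
      exact mul_right_cancel₀ hνz h3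
    have hβ : x.2 = y.2 := by
      apply indep
      intro a b
      have h := hE a b
      rw [hα] at h
      linarith
    exact Prod.ext hα hβ
  · ext A
    simp only [Set.mem_range, Set.mem_setOf_eq]
    constructor
    · rintro ⟨x, rfl⟩
      apply Matrix.IsSymm.ext
      intro a b
      rw [entry, entry]
      have hsc : (∑ j, x.2 j * (w j b * w j a)) = ∑ j, x.2 j * (w j a * w j b) :=
        Finset.sum_congr rfl fun j _ => by ring
      rw [hsc]; ring
    · intro hA
      have hAs : ∀ a b, A b a = A a b := fun a b => hA.apply a b
      set αv : Fin n → ℝ :=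
        fun k => if k = z then A z z / ν z else (2*A z k - (A z z / ν z)*ν k)/ν z with hαv
      set B : Fin n → Fin n → ℝ :=
        fun a b => A a b - 1/2*(αv a * ν b + αv b * ν a) with hBdef
      have hBsymm : ∀ a b, B b a = B a b := fun a b => by
        simp only [hBdef]; rw [hAs a b]; ring
      have hBz : ∀ b, B z b = 0 := by
        intro b
        by_cases hb : b = z
        · subst hb
          simp only [hBdef, hαv, if_pos rfl, ite_true]
          field_simp
          ring
        · simp only [hBdef, hαv, if_pos rfl, if_neg hb, ite_true]
          field_simp
          ring
      have hBz2 : ∀ a, B a z = 0 := fun a => (hBsymm z a).trans (hBz a)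
      set βv : Fin m → ℝ := fun j =>
        if pj j = qj j then 2*B (pj j) (pj j) - ∑ k, B (pj j) k else 2 * B (pj j) (qj j)
        with hβv
      have hoffkey : ∀ p q : Fin n, p ≤ q → p ≠ q → p ≠ z →
          (∑ j, βv j * (w j p * w j q)) = B p q := by
        intro p q hpq hne0 hpzz
        obtain ⟨j0, hj0⟩ := hsurj p q hpq hpzz
        obtain ⟨hp0, hq0⟩ := pairRec j0 p q hpq hj0
        have hzero : ∀ j' ∈ Finset.univ, j' ≠ j0 → βv j' * (w j' p * w j' q) = 0 := by
          intro j' _ hj'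
          suffices h : w j' p * w j' q = 0 by rw [h, mul_zero]
          by_contra h0
          obtain ⟨h1, h2⟩ := mul_ne_zero_iff.mp h0
          rw [hW j'] at h1 h2
          obtain ⟨hp, hq⟩ := pairDet (hle j') hpq hne0 ((Wv_ne_iff _ _ _).mp h1)
            ((Wv_ne_iff _ _ _).mp h2) (Or.inl rfl) (Or.inr rfl)
          exact hj' (hwinj (by rw [hW j', hj0, hp, hq]))
        rw [Finset.sum_eq_single_of_mem j0 (Finset.mem_univ _) hzero]
        have hprod : w j0 p * w j0 q = 1/2 := by
          rw [hj0]; exact Wv_prod _ _ _ _ hne0 (Or.inl rfl) (Or.inr rfl)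
        rw [hprod, hβv]
        simp only [hp0, hq0, if_neg hne0]
        ring
      have hdiagkey : ∀ a : Fin n, a ≠ z → (∑ j, βv j * (w j a * w j a)) = B a a :=
        sumdiag n z hz m w hwinj pj qj hle hpz hqz hW hsurj pairRec B hBsymm hBz2 βv
          (fun j => congrFun hβv j)
      have hKey : ∀ a b : Fin n, (∑ j, βv j * (w j a * w j b)) = B a b := by
        intro a b
        by_cases haz : a = z
        · subst haz
          rw [hBz b]
          exact Finset.sum_eq_zero fun j _ => by rw [hwz j, zero_mul, mul_zero]
        · by_cases hbz : b = z
          · subst hbz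
            rw [hBz2 a]
            exact Finset.sum_eq_zero fun j _ => by rw [hwz j, mul_zero, mul_zero]
          · by_cases hab : a = b
            · subst hab
              exact hdiagkey a haz
            · rcases le_total a b with h | h
              · exact hoffkey a b h hab haz
              · have h2 : (∑ j, βv j * (w j a * w j b)) = ∑ j, βv j * (w j b * w j a) :=
                  Finset.sum_congr rfl fun j _ => by ring
                rw [h2, hoffkey b a h (Ne.symm hab) hbz]
                exact hBsymm a b
      refine ⟨(αv, βv), ?_⟩
      apply Matrix.ext
      intro a b
      show (symPart (tensor (toEuc αv) ν) + ∑ j, βv j • tensor (w j) (w j)) a b = A a b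
      rw [entry, hKey]
      simp only [hBdef]
      ring

end Stmt5

/-- Lemma 2.3, algebraic decomposition: for `ν ∈ S^{n−1}` with
`ν·e₁ ≠ 0`, the linear map `Φ(α,β) = α ⊙ ν + Σ_{j=n+1}^{n_*} β_{j−n} ν_j ⊗ ν_j`
is a linear isomorphism from `ℝⁿ × ℝ^{n_*−n}` onto `Sym_n`: it is injective and its
range is exactly the set of symmetric matrices. -/
theorem statement5
    (n : ℕ) (hn : 2 ≤ n)
    (νf : Fin (nstar n) → Euc n)
    (hν_inj : Function.Injective νf)
    (hν_range : Set.range νf = nuSet n)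
    (hν_ord : ∀ i : Fin (nstar n), (i : ℕ) < n → νf i ⟨0, by omega⟩ ≠ 0)
    (ν : Euc n) (hν_unit : ‖ν‖ = 1) (hν_e1 : ν ⟨0, by omega⟩ ≠ 0) :
    Function.Injective
      (fun p : (Fin n → ℝ) × (Fin (nstar n - n) → ℝ) =>
        symPart (tensor (toEuc p.1) ν)
          + ∑ j : Fin (nstar n - n),
              p.2 j • tensor (νf (tailIdx n j)) (νf (tailIdx n j))) ∧
    Set.range
      (fun p : (Fin n → ℝ) × (Fin (nstar n - n) → ℝ) =>
        symPart (tensor (toEuc p.1) ν)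
          + ∑ j : Fin (nstar n - n),
              p.2 j • tensor (νf (tailIdx n j)) (νf (tailIdx n j)))
      = {A : Matrix (Fin n) (Fin n) ℝ | A.IsSymm} := by
  classical
  have hnpos : 0 < n := by omega
  obtain ⟨stepA, stepC⟩ := Stmt5.counting n νf hν_inj hν_range ⟨0, hnpos⟩ rfl
    (fun i h => hν_ord i h)
  have hmem : ∀ j : Fin (nstar n - n), ∃ p q : Fin n,
      p ≤ q ∧ p ≠ (⟨0, hnpos⟩ : Fin n) ∧ νf (tailIdx n j) = Stmt5.Wv n p q := by
    intro j
    have hnu : νf (tailIdx n j) ∈ nuSet n := hν_range ▸ Set.mem_range_self _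
    obtain ⟨p, q, hpq, hWv⟩ := hnu
    refine ⟨p, q, hpq, ?_, hWv⟩
    intro hp
    have h0 := stepA j
    rw [hWv] at h0
    exact (Stmt5.Wv_ne_iff p q ⟨0, hnpos⟩).mpr (Or.inl hp.symm) h0
  choose pj qj hle hne hW using hmem
  have hwinj : Function.Injective (fun j : Fin (nstar n - n) => νf (tailIdx n j)) := by
    intro j j' h
    have h2 := hν_inj h
    have h3 : (tailIdx n j : ℕ) = (tailIdx n j' : ℕ) := by rw [h2]
    simp only [tailIdx] at h3
    exact Fin.ext (by omega)
  exact Stmt5.key n hnpos ⟨0, hnpos⟩ rfl ν hν_e1 (nstar n - n)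
    (fun j => νf (tailIdx n j)) hwinj pj qj hle hne hW
    (fun p q h1 h2 => stepC p q h1 h2)
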